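/- There exists a constant c > 0 such that for every integer p ≥ 1 and every real polynomial q in two variables of degree at most p in each variable, ∫_S ((∂_x q)(x,y)² + (∂_y q)(x,y)²) dx dy ≤ c · p⁴ · ∫_S q(x,y)² dx dy, where S = [0,1]². -/

import Mathlib

open MeasureTheory

/-- The unit square `S = [0,1]²`. -/
def unitSquare : Set (ℝ × ℝ) := Set.Icc (0 : ℝ) 1 ×ˢ Set.Icc (0 : ℝ) 1

open Polynomial MeasureTheory Nat

noncomputable def pint (P : Polynomial ℝ) : ℝ := ∫ x in (0:ℝ)..1, P.eval x

lemma pint_ii (P : Polynomial ℝ) : IntervalIntegrable (fun x => P.eval x) volume 0 1 :=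
  P.continuous.intervalIntegrable _ _

lemma pint_add (P Q : Polynomial ℝ) : pint (P + Q) = pint P + pint Q := by
  unfold pint
  simp only [eval_add]
  exact intervalIntegral.integral_add (pint_ii P) (pint_ii Q)

lemma pint_zero : pint 0 = 0 := by unfold pint; simp

lemma pint_C_mul (c : ℝ) (P : Polynomial ℝ) : pint (C c * P) = c * pint P := by
  unfold pint
  simp only [eval_mul, eval_C]
  exact intervalIntegral.integral_const_mul c _

lemma pint_sum {ι : Type*} (s : Finset ι) (f : ι → Polynomial ℝ) :
    pint (∑ i ∈ s, f i) = ∑ i ∈ s, pint (f i) := by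
  classical
  induction s using Finset.cons_induction with
  | empty => simp [pint_zero]
  | cons i s his ih => rw [Finset.sum_cons, Finset.sum_cons, pint_add, ih]

lemma pint_derivative (P : Polynomial ℝ) : pint (derivative P) = P.eval 1 - P.eval 0 := by
  have hd : (fun x => (derivative P).eval x) = deriv (fun y => P.eval y) := by
    funext x; rw [Polynomial.deriv]
  unfold pint
  rw [show (fun x => (derivative P).eval x) = deriv fun y => P.eval y from hd]
  exact intervalIntegral.integral_deriv_eq_sub (fun x _ => P.differentiableAt)
    (hd ▸ pint_ii (derivative P))

lemma pint_ibp (P Q : Polynomial ℝ) :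
    pint (derivative P * Q) =
      P.eval 1 * Q.eval 1 - P.eval 0 * Q.eval 0 - pint (P * derivative Q) := by
  have h := pint_derivative (P * Q)
  rw [derivative_mul, pint_add] at h
  simp only [eval_mul] at h
  linarith

noncomputable def w : Polynomial ℝ := X * (X - 1)

noncomputable def legP (n : ℕ) : Polynomial ℝ := derivative^[n] (w ^ n)

lemma w_monic : w.Monic := by
  have : (X - 1 : Polynomial ℝ) = X - C 1 := by simp
  exact monic_X.mul (this ▸ monic_X_sub_C 1)

lemma w_natDegree : w.natDegree = 2 := by
  unfold w; compute_degree!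

lemma w_pow_natDegree (n : ℕ) : (w ^ n).natDegree = 2 * n := by
  rw [natDegree_pow, w_natDegree]; ring

lemma w_pow_coeff_of_lt {j n : ℕ} (hj : j < n) : (w ^ n).coeff j = 0 := by
  have h : w ^ n = (X - 1) ^ n * X ^ n := by rw [w, mul_pow]; ring
  rw [h, coeff_mul_X_pow', if_neg (by omega)]

lemma w_pow_coeff_self (n : ℕ) : (w ^ n).coeff n = (-1) ^ n := by
  have h : w ^ n = (X - 1) ^ n * X ^ n := by rw [w, mul_pow]; ring
  rw [h, coeff_mul_X_pow', if_pos le_rfl]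
  simp only [Nat.sub_self]
  rw [coeff_zero_eq_eval_zero]
  simp

lemma w_pow_coeff_top (n : ℕ) : (w ^ n).coeff (2 * n) = 1 := by
  have := (w_monic.pow n).coeff_natDegree
  rwa [w_pow_natDegree] at this

lemma legP_natDegree (n : ℕ) : (legP n).natDegree ≤ n := by
  have := natDegree_iterate_derivative (w ^ n) n
  rwa [w_pow_natDegree, show 2 * n - n = n by omega] at this

lemma legP_coeff_self (n : ℕ) : (legP n).coeff n = ((n + n).descFactorial n : ℝ) := by
  rw [legP, coeff_iterate_derivative, show n + n = 2 * n by ring, w_pow_coeff_top]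
  simp

lemma legP_coeff_self_ne (n : ℕ) : (legP n).coeff n ≠ 0 := by
  rw [legP_coeff_self]
  have : (n + n).descFactorial n ≠ 0 := by
    rw [Ne, Nat.descFactorial_eq_zero_iff_lt]; omega
  exact_mod_cast this

lemma iter_eval_zero {n j : ℕ} (hj : j < n) : (derivative^[j] (w ^ n)).eval 0 = 0 := by
  rw [← coeff_zero_eq_eval_zero, coeff_iterate_derivative, zero_add,
    w_pow_coeff_of_lt hj, smul_zero]

lemma iter_deriv_comp (P : Polynomial ℝ) (j : ℕ) :
    derivative^[j] (P.comp (1 - X)) = ((-1 : ℝ) ^ j) • ((derivative^[j] P).comp (1 - X)) := by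
  induction j with
  | zero => simp
  | succ j ih =>
    rw [Function.iterate_succ_apply', ih, derivative_smul, derivative_comp,
      Function.iterate_succ_apply']
    rw [show derivative (1 - X : Polynomial ℝ) = -1 by simp]
    rw [pow_succ, mul_smul]
    congr 1
    rw [neg_one_smul, neg_one_mul]

lemma w_pow_comp (n : ℕ) : (w ^ n).comp (1 - X) = w ^ n := by
  rw [pow_comp]
  congr 1
  unfold w
  simp only [mul_comp, sub_comp, X_comp, one_comp]
  ring

lemma iter_comp_eq (n j : ℕ) :
    ((derivative^[j] (w ^ n)).comp (1 - X)) = ((-1 : ℝ) ^ j) • derivative^[j] (w ^ n) := by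
  have h := iter_deriv_comp (w ^ n) j
  rw [w_pow_comp] at h
  have h2 := congrArg (fun Q : Polynomial ℝ => ((-1 : ℝ) ^ j) • Q) h
  simp only [smul_smul, ← pow_add, ← two_mul] at h2
  have h1 : ((-1 : ℝ)) ^ (2 * j) = 1 := by simp [pow_mul]
  rw [h1, one_smul] at h2
  exact h2.symm

lemma iter_eval_one {n j : ℕ} (hj : j < n) : (derivative^[j] (w ^ n)).eval 1 = 0 := by
  have h2 : ((derivative^[j] (w ^ n)).comp (1 - X)).eval 0 = (derivative^[j] (w ^ n)).eval 1 := by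
    rw [eval_comp]; norm_num
  rw [← h2, iter_comp_eq, eval_smul, iter_eval_zero hj, smul_zero]

lemma legP_eval_zero (n : ℕ) : (legP n).eval 0 = (-1) ^ n * (n ! : ℝ) := by
  rw [legP, ← coeff_zero_eq_eval_zero, coeff_iterate_derivative, zero_add,
    w_pow_coeff_self, Nat.descFactorial_self]
  simp [mul_comm]

lemma legP_eval_one (n : ℕ) : (legP n).eval 1 = (n ! : ℝ) := by
  have h2 : ((derivative^[n] (w ^ n)).comp (1 - X)).eval 0 = (derivative^[n] (w ^ n)).eval 1 := by
    rw [eval_comp]; norm_num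
  have : (legP n).eval 1 = ((-1 : ℝ) ^ n) * (legP n).eval 0 := by
    rw [legP, ← h2, iter_comp_eq, eval_smul, smul_eq_mul]
  rw [this, legP_eval_zero, ← mul_assoc, ← pow_add, ← two_mul]
  simp [pow_mul]

lemma iter_ibp (n : ℕ) (s : Polynomial ℝ) :
    ∀ j ≤ n, pint (legP n * s) = (-1 : ℝ) ^ j * pint (derivative^[n - j] (w ^ n) * derivative^[j] s) := by
  intro j
  induction j with
  | zero => intro _; simp [legP]
  | succ j ih =>
    intro hj
    rw [ih (by omega)]
    have key : pint (derivative^[n - j] (w ^ n) * derivative^[j] s)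
        = - pint (derivative^[n - (j + 1)] (w ^ n) * derivative^[j + 1] s) := by
      have hsplit : derivative^[n - j] (w ^ n) = derivative (derivative^[n - (j + 1)] (w ^ n)) := by
        rw [show n - j = (n - (j + 1)) + 1 by omega, Function.iterate_succ_apply']
      rw [hsplit, pint_ibp, iter_eval_zero (by omega : n - (j+1) < n),
        iter_eval_one (by omega : n - (j+1) < n),
        show derivative (derivative^[j] s) = derivative^[j+1] s from
          (Function.iterate_succ_apply' _ _ _).symm]
      ring
    rw [key, pow_succ]
    ring

lemma pint_legP_mul_eq_zero {n : ℕ} {s : Polynomial ℝ} (h : s.natDegree < n) :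
    pint (legP n * s) = 0 := by
  have := iter_ibp n s n le_rfl
  rw [iterate_derivative_eq_zero h] at this
  simpa [pint_zero] using this

lemma pint_legP_ortho {j k : ℕ} (h : j ≠ k) : pint (legP j * legP k) = 0 := by
  rcases Nat.lt_or_ge j k with hlt | hge
  · rw [mul_comm]
    exact pint_legP_mul_eq_zero (lt_of_le_of_lt (legP_natDegree j) hlt)
  · exact pint_legP_mul_eq_zero (lt_of_le_of_lt (legP_natDegree k) (by omega))

lemma pint_beta : ∀ b a : ℕ, pint (X ^ a * (1 - X) ^ b) = (a ! : ℝ) * (b !) / ((a + b + 1)!) := by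
  intro b
  induction b with
  | zero =>
    intro a
    have : pint (X ^ a * (1 - X) ^ 0) = ∫ x in (0:ℝ)..1, x ^ a := by
      unfold pint
      congr 1
      funext x
      simp
    rw [this, integral_pow]
    have ha : ((a : ℝ) + 1) ≠ 0 := by positivity
    have hfa : ((a + 1)! : ℝ) = (a + 1) * (a !) := by
      rw [Nat.factorial_succ]; push_cast; ring
    have hne : ((a !) : ℝ) ≠ 0 := by exact_mod_cast (Nat.factorial_ne_zero a)
    rw [show a + 0 + 1 = a + 1 by ring, hfa]
    field_simp
    simp
  | succ b ih =>
    intro a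
    have hD1 : derivative (X ^ (a + 1) : Polynomial ℝ) = C ((a : ℝ) + 1) * X ^ a := by
      rw [derivative_X_pow]
      push_cast
      simp
    have hD2 : derivative ((1 - X : Polynomial ℝ) ^ (b + 1)) = C (-((b : ℝ) + 1)) * (1 - X) ^ b := by
      rw [derivative_pow, show derivative (1 - X : Polynomial ℝ) = -1 by simp]
      simp only [Nat.add_sub_cancel, Nat.cast_add, Nat.cast_one, map_neg, map_add, map_one]
      ring
    have hibp := pint_ibp (X ^ (a + 1)) ((1 - X) ^ (b + 1))
    rw [hD1, hD2] at hibp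
    simp only [eval_pow, eval_X, eval_sub, eval_one] at hibp
    rw [show ((1 : ℝ) - 1) = 0 by ring] at hibp
    simp only [zero_pow (Nat.succ_ne_zero b), zero_pow (Nat.succ_ne_zero a), mul_zero, zero_mul,
      one_pow, mul_one, sub_zero, zero_sub] at hibp
    rw [show (C ((a:ℝ)+1) * X ^ a) * (1 - X) ^ (b+1) = C ((a:ℝ)+1) * (X ^ a * (1 - X) ^ (b+1)) by ring,
      show (X : Polynomial ℝ) ^ (a+1) * (C (-((b:ℝ)+1)) * (1 - X) ^ b) = C (-((b:ℝ)+1)) * (X ^ (a+1) * (1 - X) ^ b) by ring,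
      pint_C_mul, pint_C_mul, ih (a + 1)] at hibp
    -- hibp : (a+1) * pint (X^a * (1-X)^(b+1)) = - ( -(b+1) * ((a+1)! b! / (a+1+b+1)!))
    have ha : ((a : ℝ) + 1) ≠ 0 := by positivity
    have h1 : ((a + 1)! : ℝ) = ((a : ℝ) + 1) * (a !) := by
      rw [Nat.factorial_succ]; push_cast; ring
    have h2 : (((b + 1) !) : ℝ) = ((b : ℝ) + 1) * (b !) := by
      rw [Nat.factorial_succ]; push_cast; ring
    have h3 : a + 1 + b + 1 = a + (b + 1) + 1 := by ring
    rw [h3, h1] at hibp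
    have hden : (((a + (b+1) + 1)!) : ℝ) ≠ 0 := by exact_mod_cast Nat.factorial_ne_zero _
    rw [h2]
    have := hibp
    field_simp at this ⊢
    nlinarith [this]

lemma iter_top_eq_C (n : ℕ) : derivative^[n + n] (w ^ n) = C (((n + n)! : ℝ)) := by
  have hdeg : (derivative^[n + n] (w ^ n)).natDegree ≤ 0 := by
    have := natDegree_iterate_derivative (w ^ n) (n + n)
    rw [w_pow_natDegree] at this
    omega
  rw [eq_C_of_natDegree_le_zero hdeg, coeff_iterate_derivative, zero_add,
    show n + n = 2 * n by ring, w_pow_coeff_top, Nat.descFactorial_self]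
  simp

lemma pint_w_pow (n : ℕ) : pint (w ^ n) = (-1 : ℝ) ^ n * ((n ! : ℝ) * (n !) / ((n + n + 1)!)) := by
  have hw : w ^ n = (-1 : ℝ) ^ n • (X ^ n * (1 - X) ^ n) := by
    have : w = (-1 : ℝ) • (X * (1 - X)) := by
      unfold w; rw [show ((-1 : ℝ) • (X * (1 - X) : Polynomial ℝ)) = -(X * (1 - X)) by simp]; ring
    rw [this, _root_.smul_pow, mul_pow]
  rw [hw, show ((-1 : ℝ) ^ n • (X ^ n * (1 - X) ^ n)) = C ((-1 : ℝ) ^ n) * (X ^ n * (1 - X) ^ n) by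
    rw [smul_eq_C_mul], pint_C_mul, pint_beta]

lemma pint_legP_sq (n : ℕ) : pint (legP n * legP n) = ((n ! : ℝ)) ^ 2 / (2 * n + 1) := by
  have h := iter_ibp n (legP n) n le_rfl
  rw [Nat.sub_self, Function.iterate_zero_apply] at h
  rw [show derivative^[n] (legP n) = derivative^[n + n] (w ^ n) by
    rw [legP, ← Function.iterate_add_apply], iter_top_eq_C,
    show (w ^ n * C (((n + n)! : ℝ))) = C (((n + n)! : ℝ)) * w ^ n by ring, pint_C_mul,
    pint_w_pow] at h
  have hfac : (((n + n + 1)!) : ℝ) = (2 * (n : ℝ) + 1) * (((n + n)!) : ℝ) := by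
    rw [Nat.factorial_succ]; push_cast; ring
  have h1 : (((n + n)!) : ℝ) ≠ 0 := by exact_mod_cast Nat.factorial_ne_zero _
  have h2 : (2 * (n : ℝ) + 1) ≠ 0 := by positivity
  have hsgn : ((-1 : ℝ)) ^ n * ((-1 : ℝ)) ^ n = 1 := by
    rw [← pow_add, ← two_mul]; simp [pow_mul]
  calc pint (legP n * legP n)
      = ((-1 : ℝ) ^ n * (-1 : ℝ) ^ n) *
        ((((n + n)!) : ℝ) * ((n ! : ℝ) * (n !) / ((n + n + 1)!))) := by rw [h]; ring
    _ = (((n + n)!) : ℝ) * ((n ! : ℝ) * (n !) / ((n + n + 1)!)) := by rw [hsgn, one_mul]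
    _ = ((n ! : ℝ)) ^ 2 / (2 * n + 1) := by rw [hfac]; field_simp

lemma legP_zero : legP 0 = 1 := by simp [legP]

lemma legP_span : ∀ n : ℕ, ∀ q : Polynomial ℝ, q.natDegree ≤ n →
    ∃ a : ℕ → ℝ, q = ∑ k ∈ Finset.range (n + 1), C (a k) * legP k := by
  intro n
  induction n with
  | zero =>
    intro q hq
    refine ⟨fun _ => q.coeff 0, ?_⟩
    rw [Finset.sum_range_one, legP_zero, mul_one]
    exact eq_C_of_natDegree_le_zero hq
  | succ n ih =>
    intro q hq
    set c : ℝ := q.coeff (n + 1) / (legP (n + 1)).coeff (n + 1) with hc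
    set r : Polynomial ℝ := q - C c * legP (n + 1) with hr
    have hrdeg : r.natDegree ≤ n := by
      rw [natDegree_le_iff_coeff_eq_zero]
      intro m hm
      rcases eq_or_lt_of_le (Nat.succ_le_of_lt hm) with hm1 | hm1
      · rw [hr, coeff_sub, coeff_C_mul, ← hm1, hc,
          div_mul_cancel₀ _ (legP_coeff_self_ne (n + 1)), sub_self]
      · rw [hr, coeff_sub, coeff_C_mul,
          coeff_eq_zero_of_natDegree_lt (lt_of_le_of_lt hq hm1),
          coeff_eq_zero_of_natDegree_lt (lt_of_le_of_lt (legP_natDegree (n + 1)) hm1)]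
        ring
    obtain ⟨a, ha⟩ := ih r hrdeg
    refine ⟨fun k => if k = n + 1 then c else a k, ?_⟩
    rw [Finset.sum_range_succ]
    beta_reduce
    rw [if_pos rfl]
    have hsum : ∑ k ∈ Finset.range (n + 1), C (if k = n + 1 then c else a k) * legP k
        = ∑ k ∈ Finset.range (n + 1), C (a k) * legP k := by
      refine Finset.sum_congr rfl fun k hk => ?_
      rw [if_neg (by simp at hk; omega)]
    rw [hsum, ← ha, hr]
    ring

lemma pint_C_mul_C_mul (x y : ℝ) (P Q : Polynomial ℝ) :
    pint ((C x * P) * (C y * Q)) = x * y * pint (P * Q) := by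
  rw [show (C x * P) * (C y * Q) = C x * (C y * (P * Q)) by ring, pint_C_mul, pint_C_mul]
  ring

lemma parseval (N : ℕ) (cf : ℕ → ℝ) :
    pint ((∑ k ∈ Finset.range N, C (cf k) * legP k) * (∑ j ∈ Finset.range N, C (cf j) * legP j))
      = ∑ k ∈ Finset.range N, (cf k) ^ 2 * (((k ! : ℝ)) ^ 2 / (2 * k + 1)) := by
  rw [Finset.sum_mul_sum, pint_sum]
  refine Finset.sum_congr rfl fun k hk => ?_
  rw [pint_sum, Finset.sum_eq_single_of_mem k hk]
  · rw [pint_C_mul_C_mul, pint_legP_sq]; ring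
  · intro j hj hne
    rw [pint_C_mul_C_mul, pint_legP_ortho (Ne.symm hne)]
    ring

lemma pint_expand_mul (N : ℕ) (cf : ℕ → ℝ) (j : ℕ) (hj : j ∈ Finset.range N) :
    pint ((∑ k ∈ Finset.range N, C (cf k) * legP k) * legP j)
      = cf j * (((j ! : ℝ)) ^ 2 / (2 * j + 1)) := by
  rw [Finset.sum_mul, pint_sum, Finset.sum_eq_single_of_mem j hj]
  · rw [show (C (cf j) * legP j) * legP j = C (cf j) * (legP j * legP j) by ring,
      pint_C_mul, pint_legP_sq]
  · intro k hk hne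
    rw [show (C (cf k) * legP k) * legP j = C (cf k) * (legP k * legP j) by ring,
      pint_C_mul, pint_legP_ortho hne]
    ring

lemma pint_dLegP_bound (k j : ℕ) :
    |pint (derivative (legP k) * legP j)| ≤ 2 * (k ! : ℝ) * (j !) := by
  have hkpos : (0 : ℝ) < (k ! : ℝ) := by exact_mod_cast k.factorial_pos
  have hjpos : (0 : ℝ) < (j ! : ℝ) := by exact_mod_cast j.factorial_pos
  rcases Nat.eq_zero_or_pos k with hk0 | hk0
  · subst hk0
    rw [legP_zero, derivative_one, zero_mul, pint_zero, abs_zero]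
    positivity
  rcases le_or_gt k j with hkj | hjk
  · have hz : pint (derivative (legP k) * legP j) = 0 := by
      rw [mul_comm]
      apply pint_legP_mul_eq_zero
      have h1 : (derivative (legP k)).natDegree ≤ k - 1 :=
        le_trans (natDegree_derivative_le _) (Nat.sub_le_sub_right (legP_natDegree k) 1)
      omega
    rw [hz, abs_zero]
    positivity
  · have hz : pint (legP k * derivative (legP j)) = 0 := by
      rcases Nat.eq_zero_or_pos j with hj0 | hj0
      · subst hj0
        rw [legP_zero, derivative_one, mul_zero, pint_zero]
      · apply pint_legP_mul_eq_zero
        have h1 : (derivative (legP j)).natDegree ≤ j - 1 :=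
          le_trans (natDegree_derivative_le _) (Nat.sub_le_sub_right (legP_natDegree j) 1)
        omega
    rw [pint_ibp, hz, sub_zero, legP_eval_one, legP_eval_one, legP_eval_zero, legP_eval_zero]
    have h2 : ((-1 : ℝ) ^ k * (k ! : ℝ)) * ((-1 : ℝ) ^ j * (j ! : ℝ))
        = ((-1 : ℝ) ^ (k + j)) * ((k ! : ℝ) * (j !)) := by
      rw [pow_add]; ring
    rw [h2]
    rcases neg_one_pow_eq_or ℝ (k + j) with hs | hs <;> rw [hs]
    · rw [one_mul, sub_self, abs_zero]; positivity
    · rw [show (k ! : ℝ) * (j !) - -1 * ((k ! : ℝ) * (j !)) = 2 * ((k ! : ℝ) * (j !)) by ring]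
      rw [abs_of_nonneg (by positivity)]
      nlinarith

lemma sum_odd_real (N : ℕ) : ∑ k ∈ Finset.range N, (2 * (k : ℝ) + 1) = (N : ℝ) ^ 2 := by
  induction N with
  | zero => simp
  | succ n ih => rw [Finset.sum_range_succ, ih]; push_cast; ring

theorem markov1d (p : ℕ) (hp : 1 ≤ p) (q : Polynomial ℝ) (hq : q.natDegree ≤ p) :
    pint (derivative q * derivative q) ≤ 64 * (p : ℝ) ^ 4 * pint (q * q) := by
  obtain ⟨a, ha⟩ := legP_span p q hq
  obtain ⟨b, hb⟩ := legP_span p (derivative q) (le_trans (natDegree_derivative_le q) (by omega))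
  set N := p + 1 with hN
  set H : ℕ → ℝ := fun k => ((k ! : ℝ)) ^ 2 / (2 * k + 1) with hH
  have hHpos : ∀ k, 0 < H k := by
    intro k
    have h1 : (0 : ℝ) < (k ! : ℝ) := by exact_mod_cast k.factorial_pos
    rw [hH]
    positivity
  have hQ : pint (q * q) = ∑ k ∈ Finset.range N, (a k) ^ 2 * H k := by
    have h := parseval N a
    rw [← ha] at h
    exact h
  have hQ' : pint (derivative q * derivative q) = ∑ j ∈ Finset.range N, (b j) ^ 2 * H j := by
    have h := parseval N b
    rw [← hb] at h
    exact h
  have hQnonneg : 0 ≤ pint (q * q) := by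
    rw [hQ]
    exact Finset.sum_nonneg fun k _ => mul_nonneg (sq_nonneg _) (hHpos k).le
  have hkey : ∀ j ∈ Finset.range N, b j * H j
      = ∑ k ∈ Finset.range N, a k * pint (derivative (legP k) * legP j) := by
    intro j hj
    have h1 : pint (derivative q * legP j) = b j * H j := by
      have h := pint_expand_mul N b j hj
      rw [← hb] at h
      exact h
    have h2 : derivative q = ∑ k ∈ Finset.range N, C (a k) * derivative (legP k) := by
      conv_lhs => rw [ha]
      rw [derivative_sum]
      exact Finset.sum_congr rfl fun k _ => derivative_C_mul _ _
    have h3 : pint (derivative q * legP j)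
        = ∑ k ∈ Finset.range N, a k * pint (derivative (legP k) * legP j) := by
      rw [h2, Finset.sum_mul, pint_sum]
      refine Finset.sum_congr rfl fun k _ => ?_
      rw [show (C (a k) * derivative (legP k)) * legP j
          = C (a k) * (derivative (legP k) * legP j) by ring, pint_C_mul]
    rw [← h1, h3]
  set M := ∑ k ∈ Finset.range N, |a k| * (k ! : ℝ) with hM
  have hM2 : M ^ 2 ≤ pint (q * q) * (N : ℝ) ^ 2 := by
    have hCS := Finset.sum_mul_sq_le_sq_mul_sq (Finset.range N)
      (fun k => |a k| * Real.sqrt (H k)) (fun k => (k ! : ℝ) / Real.sqrt (H k))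
    have he : ∀ k ∈ Finset.range N,
        (|a k| * Real.sqrt (H k)) * ((k ! : ℝ) / Real.sqrt (H k)) = |a k| * (k ! : ℝ) := by
      intro k _
      have hs : Real.sqrt (H k) ≠ 0 := (Real.sqrt_pos.mpr (hHpos k)).ne'
      field_simp
    have hf : ∀ k ∈ Finset.range N, (|a k| * Real.sqrt (H k)) ^ 2 = (a k) ^ 2 * H k := by
      intro k _
      rw [mul_pow, sq_abs, Real.sq_sqrt (hHpos k).le]
    have hg : ∀ k ∈ Finset.range N, ((k ! : ℝ) / Real.sqrt (H k)) ^ 2 = 2 * (k : ℝ) + 1 := by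
      intro k _
      have h1 : (0 : ℝ) < (k ! : ℝ) := by exact_mod_cast k.factorial_pos
      rw [div_pow, Real.sq_sqrt (hHpos k).le, hH]
      have h2 : (2 * (k : ℝ) + 1) ≠ 0 := by positivity
      field_simp
    rw [Finset.sum_congr rfl he, Finset.sum_congr rfl hf, Finset.sum_congr rfl hg,
      sum_odd_real, ← hQ, ← hM] at hCS
    exact hCS
  have hjb : ∀ j ∈ Finset.range N,
      (b j) ^ 2 * H j ≤ (2 * (j : ℝ) + 1) * (4 * (N : ℝ) ^ 2 * pint (q * q)) := by
    intro j hj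
    have hjpos : (0 : ℝ) < (j ! : ℝ) := by exact_mod_cast j.factorial_pos
    have h1 : |b j * H j| ≤ 2 * (j ! : ℝ) * M := by
      rw [hkey j hj]
      calc |∑ k ∈ Finset.range N, a k * pint (derivative (legP k) * legP j)|
          ≤ ∑ k ∈ Finset.range N, |a k * pint (derivative (legP k) * legP j)| :=
            Finset.abs_sum_le_sum_abs _ _
        _ ≤ ∑ k ∈ Finset.range N, |a k| * (2 * (k ! : ℝ) * (j !)) := by
            refine Finset.sum_le_sum fun k _ => ?_
            rw [abs_mul]
            exact mul_le_mul_of_nonneg_left (pint_dLegP_bound k j) (abs_nonneg _)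
        _ = 2 * (j ! : ℝ) * M := by
            rw [hM, Finset.mul_sum]
            exact Finset.sum_congr rfl fun k _ => by ring
    have h2 : (b j * H j) ^ 2 ≤ (2 * (j ! : ℝ) * M) ^ 2 := by
      rw [← sq_abs (b j * H j)]
      exact pow_le_pow_left₀ (abs_nonneg _) h1 2
    have h3 : (b j) ^ 2 * H j = (b j * H j) ^ 2 / H j := by
      have := (hHpos j).ne'
      field_simp
    have hMnonneg : 0 ≤ M := Finset.sum_nonneg fun k _ =>
      mul_nonneg (abs_nonneg _) (by positivity)
    have h5 : (2 * (j ! : ℝ) * M) ^ 2 / H j = (2 * (j : ℝ) + 1) * (4 * M ^ 2) := by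
      rw [hH]
      have h6 : (2 * (j : ℝ) + 1) ≠ 0 := by positivity
      field_simp
      ring
    rw [h3]
    calc (b j * H j) ^ 2 / H j ≤ (2 * (j ! : ℝ) * M) ^ 2 / H j := by
          gcongr
      _ = (2 * (j : ℝ) + 1) * (4 * M ^ 2) := h5
      _ ≤ (2 * (j : ℝ) + 1) * (4 * (N : ℝ) ^ 2 * pint (q * q)) := by
          have h7 : 0 ≤ 2 * (j : ℝ) + 1 := by positivity
          have h8 : M ^ 2 ≤ (N : ℝ) ^ 2 * pint (q * q) := by
            rw [mul_comm ((N : ℝ) ^ 2)]; exact hM2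
          nlinarith
  calc pint (derivative q * derivative q)
      = ∑ j ∈ Finset.range N, (b j) ^ 2 * H j := hQ'
    _ ≤ ∑ j ∈ Finset.range N, (2 * (j : ℝ) + 1) * (4 * (N : ℝ) ^ 2 * pint (q * q)) :=
        Finset.sum_le_sum hjb
    _ = (N : ℝ) ^ 2 * (4 * (N : ℝ) ^ 2 * pint (q * q)) := by
        rw [← Finset.sum_mul, sum_odd_real]
    _ ≤ 64 * (p : ℝ) ^ 4 * pint (q * q) := by
        have hNp : (N : ℝ) ≤ 2 * (p : ℝ) := by
          rw [hN]; push_cast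
          have : (1 : ℝ) ≤ (p : ℝ) := by exact_mod_cast hp
          linarith
        have hNnn : (0 : ℝ) ≤ (N : ℝ) := by positivity
        have h4 : (N : ℝ) ^ 2 ≤ 4 * (p : ℝ) ^ 2 := by nlinarith
        have h5 : (N : ℝ) ^ 2 * (N : ℝ) ^ 2 ≤ (4 * (p : ℝ) ^ 2) * (4 * (p : ℝ) ^ 2) :=
          mul_le_mul h4 h4 (by positivity) (by positivity)
        nlinarith [mul_le_mul_of_nonneg_right h5 hQnonneg]

lemma mv_cont (r : MvPolynomial (Fin 2) ℝ) :
    Continuous fun z : ℝ × ℝ => MvPolynomial.eval ![z.1, z.2] r := by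
  apply MvPolynomial.induction_on r
  · intro a; simpa using continuous_const
  · intro f g hf hg; simp only [map_add]; exact hf.add hg
  · intro f i hf
    simp only [MvPolynomial.eval_mul, MvPolynomial.eval_X]
    refine hf.mul ?_
    fin_cases i
    · simpa using continuous_fst
    · simpa using continuous_snd

lemma eval_aeval (g : Fin 2 → Polynomial ℝ) (x : ℝ) (q : MvPolynomial (Fin 2) ℝ) :
    Polynomial.eval x (MvPolynomial.aeval g q)
      = MvPolynomial.eval (fun i => Polynomial.eval x (g i)) q := by
  apply MvPolynomial.induction_on q
  · intro a; simp
  · intro f g hf hg; simp [hf, hg]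
  · intro f i hf; simp [hf]

lemma deriv_aeval0 (y : ℝ) (q : MvPolynomial (Fin 2) ℝ) :
    derivative (MvPolynomial.aeval ![(X : Polynomial ℝ), C y] q)
      = MvPolynomial.aeval ![(X : Polynomial ℝ), C y] (MvPolynomial.pderiv 0 q) := by
  apply MvPolynomial.induction_on q
  · intro a; simp
  · intro f g hf hg; simp [hf, hg]
  · intro f i hf
    rw [map_mul, derivative_mul, hf, MvPolynomial.pderiv_mul, map_add, map_mul, map_mul]
    congr 1
    fin_cases i
    · simp [Fin.isValue]
    · simp [Fin.isValue, MvPolynomial.pderiv_X_of_ne (show (1 : Fin 2) ≠ 0 by decide)]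

lemma deriv_aeval1 (x : ℝ) (q : MvPolynomial (Fin 2) ℝ) :
    derivative (MvPolynomial.aeval ![C x, (X : Polynomial ℝ)] q)
      = MvPolynomial.aeval ![C x, (X : Polynomial ℝ)] (MvPolynomial.pderiv 1 q) := by
  apply MvPolynomial.induction_on q
  · intro a; simp
  · intro f g hf hg; simp [hf, hg]
  · intro f i hf
    rw [map_mul, derivative_mul, hf, MvPolynomial.pderiv_mul, map_add, map_mul, map_mul]
    congr 1
    fin_cases i
    · simp [Fin.isValue, MvPolynomial.pderiv_X_of_ne (show (0 : Fin 2) ≠ 1 by decide)]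
    · simp [Fin.isValue]

lemma deg_aeval_le (i₀ : Fin 2) (g : Fin 2 → Polynomial ℝ)
    (hg : ∀ i, (g i).natDegree ≤ (if i = i₀ then 1 else 0)) (q : MvPolynomial (Fin 2) ℝ) :
    (MvPolynomial.aeval g q).natDegree ≤ q.degreeOf i₀ := by
  conv_lhs => rw [q.as_sum]
  rw [map_sum]
  apply natDegree_sum_le_of_forall_le
  intro m hm
  rw [MvPolynomial.aeval_monomial]
  refine le_trans (natDegree_mul_le) ?_
  have h1 : (algebraMap ℝ (Polynomial ℝ) (MvPolynomial.coeff m q)).natDegree = 0 :=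
    natDegree_C _
  rw [h1, zero_add]
  refine le_trans ?_ (MvPolynomial.monomial_le_degreeOf i₀ hm)
  rw [Finsupp.prod]
  refine le_trans (natDegree_prod_le _ _) ?_
  have h2 : ∀ i : Fin 2, (g i ^ m i).natDegree ≤ m i * (if i = i₀ then 1 else 0) :=
    fun i => le_trans (natDegree_pow_le) (Nat.mul_le_mul_left _ (hg i))
  refine le_trans (Finset.sum_le_sum fun i _ => h2 i) ?_
  refine le_trans (Finset.sum_le_sum_of_subset (Finset.subset_univ _)) ?_
  rw [Fin.sum_univ_two]
  fin_cases i₀ <;> simp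

lemma integral_Icc_eq_pint (P : Polynomial ℝ) :
    ∫ x in Set.Icc (0:ℝ) 1, P.eval x = pint P := by
  rw [MeasureTheory.integral_Icc_eq_integral_Ioc, ← intervalIntegral.integral_of_le zero_le_one]
  rfl

lemma sqInt (r : MvPolynomial (Fin 2) ℝ) :
    IntegrableOn (fun z : ℝ × ℝ => (MvPolynomial.eval ![z.1, z.2] r) ^ 2) unitSquare volume :=
  ((mv_cont r).pow 2).continuousOn.integrableOn_compact (isCompact_Icc.prod isCompact_Icc)

lemma sqInt' (r : MvPolynomial (Fin 2) ℝ) :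
    MeasureTheory.Integrable (fun z : ℝ × ℝ => (MvPolynomial.eval ![z.1, z.2] r) ^ 2)
      (((volume : Measure ℝ).restrict (Set.Icc 0 1)).prod
        ((volume : Measure ℝ).restrict (Set.Icc 0 1))) := by
  rw [MeasureTheory.Measure.prod_restrict, ← MeasureTheory.Measure.volume_eq_prod]
  exact sqInt r

lemma iter_xy (r : MvPolynomial (Fin 2) ℝ) :
    ∫ z in unitSquare, (MvPolynomial.eval ![z.1, z.2] r) ^ 2
      = ∫ x in Set.Icc (0:ℝ) 1, ∫ y in Set.Icc (0:ℝ) 1, (MvPolynomial.eval ![x, y] r) ^ 2 := by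
  rw [show unitSquare = Set.Icc (0:ℝ) 1 ×ˢ Set.Icc (0:ℝ) 1 from rfl,
    MeasureTheory.Measure.volume_eq_prod]
  exact MeasureTheory.setIntegral_prod _ (by rw [← MeasureTheory.Measure.volume_eq_prod]; exact sqInt r)

lemma iter_yx (r : MvPolynomial (Fin 2) ℝ) :
    ∫ z in unitSquare, (MvPolynomial.eval ![z.1, z.2] r) ^ 2
      = ∫ y in Set.Icc (0:ℝ) 1, ∫ x in Set.Icc (0:ℝ) 1, (MvPolynomial.eval ![x, y] r) ^ 2 := by
  rw [iter_xy r]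
  exact MeasureTheory.integral_integral_swap (sqInt' r)

lemma eval_aeval0 (x y : ℝ) (r : MvPolynomial (Fin 2) ℝ) :
    Polynomial.eval x (MvPolynomial.aeval ![(X : Polynomial ℝ), C y] r)
      = MvPolynomial.eval ![x, y] r := by
  rw [eval_aeval, show (fun i => Polynomial.eval x (![(X : Polynomial ℝ), C y] i)) = ![x, y]
    from funext fun i => by fin_cases i <;> simp]

lemma eval_aeval1 (x y : ℝ) (r : MvPolynomial (Fin 2) ℝ) :
    Polynomial.eval y (MvPolynomial.aeval ![C x, (X : Polynomial ℝ)] r)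
      = MvPolynomial.eval ![x, y] r := by
  rw [eval_aeval, show (fun i => Polynomial.eval y (![C x, (X : Polynomial ℝ)] i)) = ![x, y]
    from funext fun i => by fin_cases i <;> simp]

lemma inner_bound0 (p : ℕ) (hp : 1 ≤ p) (q : MvPolynomial (Fin 2) ℝ)
    (hdeg : q.degreeOf 0 ≤ p) (y : ℝ) :
    (∫ x in Set.Icc (0:ℝ) 1, (MvPolynomial.eval ![x, y] (MvPolynomial.pderiv 0 q)) ^ 2)
      ≤ 64 * (p : ℝ) ^ 4 * ∫ x in Set.Icc (0:ℝ) 1, (MvPolynomial.eval ![x, y] q) ^ 2 := by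
  set Q : Polynomial ℝ := MvPolynomial.aeval ![(X : Polynomial ℝ), C y] q with hQ
  have hQdeg : Q.natDegree ≤ p := by
    refine le_trans (deg_aeval_le 0 _ (fun i => ?_) q) hdeg
    fin_cases i <;> simp
  have h1 : ∀ x : ℝ, (MvPolynomial.eval ![x, y] (MvPolynomial.pderiv 0 q)) ^ 2
      = Polynomial.eval x (derivative Q * derivative Q) := by
    intro x
    rw [Polynomial.eval_mul, ← sq, hQ, deriv_aeval0, eval_aeval0]
  have h2 : ∀ x : ℝ, (MvPolynomial.eval ![x, y] q) ^ 2 = Polynomial.eval x (Q * Q) := by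
    intro x
    rw [Polynomial.eval_mul, ← sq, hQ, eval_aeval0]
  rw [MeasureTheory.integral_congr_ae (Filter.Eventually.of_forall h1),
    MeasureTheory.integral_congr_ae (Filter.Eventually.of_forall h2),
    integral_Icc_eq_pint, integral_Icc_eq_pint]
  exact markov1d p hp Q hQdeg

lemma inner_bound1 (p : ℕ) (hp : 1 ≤ p) (q : MvPolynomial (Fin 2) ℝ)
    (hdeg : q.degreeOf 1 ≤ p) (x : ℝ) :
    (∫ y in Set.Icc (0:ℝ) 1, (MvPolynomial.eval ![x, y] (MvPolynomial.pderiv 1 q)) ^ 2)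
      ≤ 64 * (p : ℝ) ^ 4 * ∫ y in Set.Icc (0:ℝ) 1, (MvPolynomial.eval ![x, y] q) ^ 2 := by
  set Q : Polynomial ℝ := MvPolynomial.aeval ![C x, (X : Polynomial ℝ)] q with hQ
  have hQdeg : Q.natDegree ≤ p := by
    refine le_trans (deg_aeval_le 1 _ (fun i => ?_) q) hdeg
    fin_cases i <;> simp
  have h1 : ∀ y : ℝ, (MvPolynomial.eval ![x, y] (MvPolynomial.pderiv 1 q)) ^ 2
      = Polynomial.eval y (derivative Q * derivative Q) := by
    intro y
    rw [Polynomial.eval_mul, ← sq, hQ, deriv_aeval1, eval_aeval1]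
  have h2 : ∀ y : ℝ, (MvPolynomial.eval ![x, y] q) ^ 2 = Polynomial.eval y (Q * Q) := by
    intro y
    rw [Polynomial.eval_mul, ← sq, hQ, eval_aeval1]
  rw [MeasureTheory.integral_congr_ae (Filter.Eventually.of_forall h1),
    MeasureTheory.integral_congr_ae (Filter.Eventually.of_forall h2),
    integral_Icc_eq_pint, integral_Icc_eq_pint]
  exact markov1d p hp Q hQdeg

lemma key0 (p : ℕ) (hp : 1 ≤ p) (q : MvPolynomial (Fin 2) ℝ) (hdeg : q.degreeOf 0 ≤ p) :
    ∫ z in unitSquare, (MvPolynomial.eval ![z.1, z.2] (MvPolynomial.pderiv 0 q)) ^ 2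
      ≤ 64 * (p : ℝ) ^ 4 * ∫ z in unitSquare, (MvPolynomial.eval ![z.1, z.2] q) ^ 2 := by
  rw [iter_yx (MvPolynomial.pderiv 0 q), iter_yx q, ← MeasureTheory.integral_const_mul]
  refine MeasureTheory.integral_mono ((sqInt' (MvPolynomial.pderiv 0 q)).integral_prod_right)
    (((sqInt' q).integral_prod_right).const_mul _) ?_
  intro y
  exact inner_bound0 p hp q hdeg y

lemma key1 (p : ℕ) (hp : 1 ≤ p) (q : MvPolynomial (Fin 2) ℝ) (hdeg : q.degreeOf 1 ≤ p) :
    ∫ z in unitSquare, (MvPolynomial.eval ![z.1, z.2] (MvPolynomial.pderiv 1 q)) ^ 2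
      ≤ 64 * (p : ℝ) ^ 4 * ∫ z in unitSquare, (MvPolynomial.eval ![z.1, z.2] q) ^ 2 := by
  rw [iter_xy (MvPolynomial.pderiv 1 q), iter_xy q, ← MeasureTheory.integral_const_mul]
  refine MeasureTheory.integral_mono ((sqInt' (MvPolynomial.pderiv 1 q)).integral_prod_left)
    (((sqInt' q).integral_prod_left).const_mul _) ?_
  intro x
  exact inner_bound1 p hp q hdeg x


/-- $hp$-explicit H¹-to-L² polynomial inverse estimate on the
unit square (inequality (3.4) of Proposition 3.2 of the paper, squared
form). -/
theorem h1_inverse_estimate_square :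
    ∃ c : ℝ, 0 < c ∧
      ∀ p : ℕ, 1 ≤ p → ∀ q : MvPolynomial (Fin 2) ℝ,
        (∀ i : Fin 2, q.degreeOf i ≤ p) →
        ∫ z in unitSquare,
            ((MvPolynomial.eval ![z.1, z.2] (MvPolynomial.pderiv 0 q)) ^ 2 +
              (MvPolynomial.eval ![z.1, z.2] (MvPolynomial.pderiv 1 q)) ^ 2) ≤
          c * (p : ℝ) ^ 4 *
            ∫ z in unitSquare, (MvPolynomial.eval ![z.1, z.2] q) ^ 2 := by
  refine ⟨128, by norm_num, ?_⟩
  intro p hp q hdeg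
  have hsplit : ∫ z in unitSquare,
      ((MvPolynomial.eval ![z.1, z.2] (MvPolynomial.pderiv 0 q)) ^ 2 +
        (MvPolynomial.eval ![z.1, z.2] (MvPolynomial.pderiv 1 q)) ^ 2)
      = (∫ z in unitSquare, (MvPolynomial.eval ![z.1, z.2] (MvPolynomial.pderiv 0 q)) ^ 2)
        + ∫ z in unitSquare, (MvPolynomial.eval ![z.1, z.2] (MvPolynomial.pderiv 1 q)) ^ 2 :=
    MeasureTheory.integral_add (sqInt (MvPolynomial.pderiv 0 q)) (sqInt (MvPolynomial.pderiv 1 q))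
  rw [hsplit]
  have h0 := key0 p hp q (hdeg 0)
  have h1 := key1 p hp q (hdeg 1)
  linarith
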